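/- arXiv:1505.03678 — 7 statements merged into one kernel-verified Lean document; each statement's English description precedes it below -/
import Mathlib

section
/- For a real symmetric positive definite n×n matrix A with smallest eigenvalue λ₁ and largest eigenvalue λₙ, the minimum over nonzero vectors x of ⟨Ax,x⟩/(‖Ax‖‖x‖) equals 2√(λ₁λₙ)/(λ₁+λₙ). -/
open scoped Matrix.Norms.L2Operator RealInnerProductSpace

/-- The "antieigenvalue" Rayleigh-type quotient ⟨Ax,x⟩/(‖Ax‖‖x‖). -/
noncomputable def rq {n : ℕ} (A : Matrix (Fin n) (Fin n) ℝ)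
    (x : EuclideanSpace ℝ (Fin n)) : ℝ :=
  ⟪Matrix.toEuclideanLin A x, x⟫ / (‖Matrix.toEuclideanLin A x‖ * ‖x‖)

/-- μ is an eigenvalue of A. -/
def IsEigenvalue {n : ℕ} (A : Matrix (Fin n) (Fin n) ℝ) (μ : ℝ) : Prop :=
  ∃ x : EuclideanSpace ℝ (Fin n), x ≠ 0 ∧ Matrix.toEuclideanLin A x = μ • x

/-!
The quotient is `cos ∠(Ax, x)`. Since the spectrum of `A` lies in `[λ₁, λₙ]`, the operator
`(A - λ₁)(λₙ - A)` is positive semidefinite, i.e. `‖Ax‖² + λ₁λₙ‖x‖² ≤ (λ₁ + λₙ)⟪Ax, x⟫`;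
AM-GM bounds the left side below by `2√(λ₁λₙ)‖Ax‖‖x‖`, which gives the lower bound.
Equality in both steps holds for `x = √λₙ e₁ + √λ₁ eₙ` with `e₁`, `eₙ` orthogonal unit
eigenvectors for `λ₁ < λₙ`; if `λ₁ = λₙ`, any eigenvector is extremal.
-/

open Module.End InnerProductGeometry Real

section

variable {E : Type*} [NormedAddCommGroup E] [InnerProductSpace ℝ E] {T : E →ₗ[ℝ] E}

theorem LinearMap.IsSymmetric.inner_eq_zero_of_apply_eq_smul (hT : T.IsSymmetric) {m M : ℝ}
    (hmM : m ≠ M) {u v : E} (hu : T u = m • u) (hv : T v = M • v) : ⟪u, v⟫ = 0 :=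
  hT.orthogonalFamily_eigenspaces hmM ⟨u, mem_eigenspace_iff.mpr hu⟩
    ⟨v, mem_eigenspace_iff.mpr hv⟩

theorem LinearMap.IsSymmetric.norm_sq_add_mul_norm_sq_le [FiniteDimensional ℝ E]
    (hT : T.IsSymmetric) {m M : ℝ} (hspec : ∀ μ, HasEigenvalue T μ → m ≤ μ ∧ μ ≤ M) (x : E) :
    ‖T x‖ ^ 2 + m * M * ‖x‖ ^ 2 ≤ (m + M) * ⟪T x, x⟫ := by
  set b := hT.eigenvectorBasis rfl
  set ev := hT.eigenvalues rfl
  have hTb : ∀ i, ⟪T x, b i⟫ = ev i * ⟪x, b i⟫ := fun i => by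
    rw [hT, hT.apply_eigenvectorBasis, real_inner_smul_right]; rfl
  have hbT : ∀ i, ⟪b i, T x⟫ = ev i * ⟪x, b i⟫ := fun i => by
    rw [real_inner_comm, hTb]
  have hfactor : 0 ≤ ⟪T x - m • x, M • x - T x⟫ := by
    rw [← b.sum_inner_mul_inner]
    refine Finset.sum_nonneg fun i _ => ?_
    obtain ⟨hmi, hiM⟩ := hspec _ (hT.hasEigenvalue_eigenvalues rfl i)
    have : ⟪T x - m • x, b i⟫ * ⟪b i, M • x - T x⟫
        = (ev i - m) * (M - ev i) * ⟪x, b i⟫ ^ 2 := by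
      simp only [inner_sub_left, inner_sub_right, real_inner_smul_left, real_inner_smul_right,
        hTb, hbT, real_inner_comm x (b i)]
      ring
    rw [this]
    exact mul_nonneg (mul_nonneg (sub_nonneg.mpr hmi) (sub_nonneg.mpr hiM)) (sq_nonneg _)
  simp only [inner_sub_left, inner_sub_right, real_inner_smul_left, real_inner_smul_right,
    real_inner_self_eq_norm_sq, real_inner_comm (T x) x] at hfactor
  linarith

theorem LinearMap.IsSymmetric.le_cos_angle [FiniteDimensional ℝ E] (hT : T.IsSymmetric)
    {m M : ℝ} (hm : 0 < m) (hmM : m ≤ M) (hspec : ∀ μ, HasEigenvalue T μ → m ≤ μ ∧ μ ≤ M) {x : E}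
    (hx : x ≠ 0) : 2 * √(m * M) / (m + M) ≤ cos (angle (T x) x) := by
  have hTx : T x ≠ 0 := fun h => by
    have := (hspec 0 (hasEigenvalue_of_hasEigenvector ⟨by simp [h], hx⟩)).1
    linarith
  have hsq : √(m * M) ^ 2 = m * M := Real.sq_sqrt (mul_pos hm (hm.trans_le hmM)).le
  have amgm : 2 * √(m * M) * (‖T x‖ * ‖x‖) ≤ ‖T x‖ ^ 2 + m * M * ‖x‖ ^ 2 := by
    nlinarith [two_mul_le_add_sq ‖T x‖ (√(m * M) * ‖x‖)]
  rw [cos_angle, div_le_div_iff₀ (by linarith) (by positivity)]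
  nlinarith [hT.norm_sq_add_mul_norm_sq_le hspec x]

theorem cos_angle_map_sqrt_smul_add_sqrt_smul {m M : ℝ} (hm : 0 < m) (hM : 0 < M) {e f : E}
    (he : ‖e‖ = 1) (hf : ‖f‖ = 1) (hef : ⟪e, f⟫ = 0) (hTe : T e = m • e) (hTf : T f = M • f) :
    cos (angle (T (√M • e + √m • f)) (√M • e + √m • f)) = 2 * √(m * M) / (m + M) := by
  have hinner : ∀ p q r s : ℝ, ⟪p • e + q • f, r • e + s • f⟫ = p * r + q * s := by
    intro p q r s
    simp only [inner_add_left, inner_add_right, real_inner_smul_left, real_inner_smul_right,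
      real_inner_self_eq_norm_sq, he, hf, hef, real_inner_comm e f]
    ring
  have hnormsq : ∀ p q : ℝ, ‖p • e + q • f‖ ^ 2 = p ^ 2 + q ^ 2 := fun p q => by
    rw [← real_inner_self_eq_norm_sq, hinner, sq, sq]
  have hTx : T (√M • e + √m • f) = (m * √M) • e + (M * √m) • f := by
    rw [map_add, map_smul, map_smul, hTe, hTf, smul_smul, smul_smul, mul_comm √M, mul_comm √m]
  have hsM := Real.sq_sqrt hM.le
  have hsm := Real.sq_sqrt hm.le
  have hsmM := Real.sq_sqrt (mul_pos hm hM).le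
  have hnorm : ‖T (√M • e + √m • f)‖ * ‖√M • e + √m • f‖ = √(m * M) * (m + M) := by
    refine (pow_left_inj₀ (by positivity) (by positivity) two_ne_zero).mp ?_
    rw [mul_pow, mul_pow, hsmM, hTx, hnormsq, hnormsq, mul_pow, mul_pow, hsM, hsm]
    ring
  rw [cos_angle, hnorm, hTx, hinner]
  field_simp
  rw [hsM, hsm, hsmM]
  ring

theorem LinearMap.IsSymmetric.exists_cos_angle_eq (hT : T.IsSymmetric) {m M : ℝ} (hm : 0 < m)
    (hM : 0 < M) {u v : E} (hu : u ≠ 0) (hTu : T u = m • u) (hv : v ≠ 0) (hTv : T v = M • v) :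
    ∃ x ≠ 0, cos (angle (T x) x) = 2 * √(m * M) / (m + M) := by
  rcases eq_or_ne m M with rfl | hne
  · refine ⟨u, hu, ?_⟩
    rw [hTu, angle_smul_left_of_pos _ _ hm, angle_self hu, cos_zero, Real.sqrt_mul_self hm.le]
    field_simp
    ring
  · have hTe : T (‖u‖⁻¹ • u) = m • ‖u‖⁻¹ • u := by rw [map_smul, hTu, smul_comm]
    have hTf : T (‖v‖⁻¹ • v) = M • ‖v‖⁻¹ • v := by rw [map_smul, hTv, smul_comm]
    have hef : ⟪‖u‖⁻¹ • u, ‖v‖⁻¹ • v⟫ = 0 := by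
      rw [real_inner_smul_left, real_inner_smul_right,
        hT.inner_eq_zero_of_apply_eq_smul hne hTu hTv, mul_zero, mul_zero]
    have hcos := cos_angle_map_sqrt_smul_add_sqrt_smul hm hM (norm_smul_inv_norm hu)
      (norm_smul_inv_norm hv) hef hTe hTf
    refine ⟨_, fun h0 => ?_, hcos⟩
    rw [h0, map_zero, angle_zero_left, cos_pi_div_two] at hcos
    have : 0 < 2 * √(m * M) / (m + M) := by positivity
    linarith

end

namespace Matrix

variable {n : ℕ} {A : Matrix (Fin n) (Fin n) ℝ}

theorem PosDef.inner_toEuclideanLin_self_pos (hA : A.PosDef) {x : EuclideanSpace ℝ (Fin n)}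
    (hx : x ≠ 0) : 0 < ⟪A.toEuclideanLin x, x⟫ := by
  have := hA.dotProduct_mulVec_pos (x := WithLp.ofLp x) (by simpa using hx)
  rw [star_trivial] at this
  exact this

theorem PosDef.pos_of_isEigenvalue (hA : A.PosDef) {μ : ℝ} (hμ : IsEigenvalue A μ) : 0 < μ := by
  obtain ⟨u, hu, hAu⟩ := hμ
  have := hA.inner_toEuclideanLin_self_pos hu
  rw [hAu, real_inner_smul_left, real_inner_self_eq_norm_sq] at this
  exact pos_of_mul_pos_left this (by positivity)

end Matrix

theorem IsEigenvalue.of_hasEigenvalue {n : ℕ} {A : Matrix (Fin n) (Fin n) ℝ} {μ : ℝ}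
    (hμ : HasEigenvalue A.toEuclideanLin μ) : IsEigenvalue A μ :=
  let ⟨u, hu, hu0⟩ := hμ.exists_hasEigenvector
  ⟨u, hu0, mem_eigenspace_iff.mp hu⟩

theorem first_antieigenvalue_formula_general {n : ℕ} (A : Matrix (Fin n) (Fin n) ℝ)
    (hPD : A.PosDef) (lam1 lamn : ℝ)
    (h1 : IsEigenvalue A lam1) (hn : IsEigenvalue A lamn)
    (hbound : ∀ μ, IsEigenvalue A μ → lam1 ≤ μ ∧ μ ≤ lamn) :
    IsLeast {r : ℝ | ∃ x : EuclideanSpace ℝ (Fin n), x ≠ 0 ∧ r = rq A x}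
      (2 * Real.sqrt (lam1 * lamn) / (lam1 + lamn)) := by
  have hT : A.toEuclideanLin.IsSymmetric := Matrix.isSymmetric_toEuclideanLin_iff.mpr hPD.1
  have hspec : ∀ μ, HasEigenvalue A.toEuclideanLin μ → lam1 ≤ μ ∧ μ ≤ lamn :=
    fun μ hμ => hbound μ (.of_hasEigenvalue hμ)
  have hl1 := hPD.pos_of_isEigenvalue h1
  have hln := hPD.pos_of_isEigenvalue hn
  have hle := (hbound lam1 h1).2
  obtain ⟨u, hu, hAu⟩ := h1
  obtain ⟨v, hv, hAv⟩ := hn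
  refine ⟨?_, ?_⟩
  · obtain ⟨x, hx, hcos⟩ := hT.exists_cos_angle_eq hl1 hln hu hAu hv hAv
    exact ⟨x, hx, by rw [rq, ← cos_angle, hcos]⟩
  · rintro r ⟨x, hx, rfl⟩
    rw [rq, ← cos_angle]
    exact hT.le_cos_angle hl1 hle hspec hx

theorem first_antieigenvalue_formula {n : ℕ} (A : Matrix (Fin n) (Fin n) ℝ)
    (hSymm : A.IsSymm) (hPD : A.PosDef) (lam1 lamn : ℝ)
    (h1 : IsEigenvalue A lam1) (hn : IsEigenvalue A lamn)
    (hbound : ∀ μ, IsEigenvalue A μ → lam1 ≤ μ ∧ μ ≤ lamn) :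
    IsLeast {r : ℝ | ∃ x : EuclideanSpace ℝ (Fin n), x ≠ 0 ∧ r = rq A x}
      (2 * Real.sqrt (lam1 * lamn) / (lam1 + lamn)) :=
  first_antieigenvalue_formula_general A hPD lam1 lamn h1 hn hbound
end

section
/- For a real symmetric positive definite n×n matrix A with smallest eigenvalue λ₁ and largest eigenvalue λₙ, the minimum over ε > 0 of the operator norm ‖εA − I‖ equals (λₙ − λ₁)/(λₙ + λ₁). -/
open scoped Matrix.Norms.L2Operator RealInnerProductSpace

/-!
The eigenvalues of `εA - I` are the `εμ - 1` for eigenvalues `μ` of `A`, and `|εμ - 1| ≤ ‖εA - I‖`.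
Since `λₙ(1 - ελ₁) + λ₁(ελₙ - 1) = λₙ - λ₁`, one of `|ελ₁ - 1|`, `|ελₙ - 1|` is at least
`c = (λₙ - λ₁)/(λₙ + λ₁)`, whatever `ε`. For `ε = 2/(λₙ + λ₁)` all the `εμ - 1` lie in `[-c, c]`, and
as `εA - I` is self-adjoint its norm is its spectral radius, hence equal to `c`.
-/

namespace Matrix

variable {ι : Type*} [Fintype ι] [DecidableEq ι]

theorem abs_le_l2_opNorm_of_toEuclideanLin_eq_smul {M : Matrix ι ι ℝ} {μ : ℝ}
    {x : EuclideanSpace ℝ ι} (hx : x ≠ 0) (hMx : toEuclideanLin M x = μ • x) : |μ| ≤ ‖M‖ := by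
  have h := (toEuclideanCLM (n := ι) (𝕜 := ℝ) M).le_opNorm x
  rw [l2_opNorm_toEuclideanCLM, ← ContinuousLinearMap.coe_coe,
    coe_toEuclideanCLM_eq_toEuclideanLin, hMx, norm_smul, Real.norm_eq_abs] at h
  exact le_of_mul_le_mul_right h (norm_pos_iff.mpr hx)

theorem spectralRadius_eq_l2_opNNNorm {M : Matrix ι ι ℝ} (hM : IsSelfAdjoint M) :
    spectralRadius ℝ M = ‖M‖₊ := by
  have hspec : spectrum ℝ (toEuclideanCLM (n := ι) (𝕜 := ℝ) M) = spectrum ℝ M :=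
    AlgEquiv.spectrum_eq (toEuclideanCLM (n := ι) (𝕜 := ℝ)).toAlgEquiv M
  rw [spectralRadius, ← hspec]
  exact ContinuousLinearMap.spectralRadius_eq_nnnorm _ (hM.map _)

theorem l2_opNorm_le_of_forall_mem_spectrum {M : Matrix ι ι ℝ} (hM : IsSelfAdjoint M) {c : ℝ}
    (hc : 0 ≤ c) (h : ∀ μ ∈ spectrum ℝ M, |μ| ≤ c) : ‖M‖ ≤ c := by
  suffices (‖M‖₊ : ENNReal) ≤ c.toNNReal by
    rwa [ENNReal.coe_le_coe, ← NNReal.coe_le_coe, Real.coe_toNNReal _ hc] at this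
  rw [← spectralRadius_eq_l2_opNNNorm hM]
  refine iSup₂_le fun μ hμ => ENNReal.coe_le_coe.mpr ?_
  rw [← NNReal.coe_le_coe, Real.coe_toNNReal _ hc]
  exact h μ hμ

end Matrix

section IsEigenvalue

variable {n : ℕ} {A : Matrix (Fin n) (Fin n) ℝ}

theorem isEigenvalue_iff_mem_spectrum {μ : ℝ} : IsEigenvalue A μ ↔ μ ∈ spectrum ℝ A := by
  rw [← Matrix.spectrum_toLpLin 2, ← Module.End.hasEigenvalue_iff_mem_spectrum,
    Module.End.hasEigenvalue_iff, Submodule.ne_bot_iff]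
  simp only [Module.End.mem_eigenspace_iff, IsEigenvalue, and_comm]

theorem IsEigenvalue.abs_le_l2_opNorm {μ : ℝ} (hμ : IsEigenvalue A μ) : |μ| ≤ ‖A‖ :=
  let ⟨_, hx, hAx⟩ := hμ
  Matrix.abs_le_l2_opNorm_of_toEuclideanLin_eq_smul hx hAx

theorem IsEigenvalue.pos {μ : ℝ} (hA : A.PosDef) (hμ : IsEigenvalue A μ) : 0 < μ := by
  obtain ⟨x, hx, hAx⟩ := hμ
  have hquad := hA.dotProduct_mulVec_pos (x := x.ofLp) (by simpa using hx)
  rw [show A.mulVec x.ofLp = μ • x.ofLp from congrArg WithLp.ofLp hAx, dotProduct_smul,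
    smul_eq_mul] at hquad
  exact pos_of_mul_pos_left hquad (dotProduct_star_self_nonneg _)

theorem isEigenvalue_smul_sub_one_iff {ε μ : ℝ} (hε : ε ≠ 0) :
    IsEigenvalue (ε • A - 1) (ε * μ - 1) ↔ IsEigenvalue A μ := by
  simp only [IsEigenvalue, map_sub, map_smul, Matrix.toLpLin_one, LinearMap.sub_apply,
    LinearMap.smul_apply, LinearMap.id_apply, sub_smul, one_smul, sub_left_inj, mul_smul,
    smul_right_inj hε]

theorem IsEigenvalue.exists_of_smul_sub_one {ε ν : ℝ} (hε : ε ≠ 0)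
    (hν : IsEigenvalue (ε • A - 1) ν) : ∃ μ, IsEigenvalue A μ ∧ ν = ε * μ - 1 := by
  have hν' : ν = ε * ((ν + 1) / ε) - 1 := by rw [mul_div_cancel₀ _ hε, add_sub_cancel_right]
  exact ⟨_, (isEigenvalue_smul_sub_one_iff hε).mp (hν' ▸ hν), hν'⟩

end IsEigenvalue

theorem sub_div_add_le_of_abs_mul_sub_one_le {a b ε r : ℝ} (ha : 0 ≤ a) (hb : 0 ≤ b)
    (hab : 0 < b + a) (h₁ : |ε * a - 1| ≤ r) (h₂ : |ε * b - 1| ≤ r) :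
    (b - a) / (b + a) ≤ r := by
  rw [div_le_iff₀ hab]
  have hb' := mul_le_mul_of_nonneg_left (neg_le_of_abs_le h₁) hb
  have ha' := mul_le_mul_of_nonneg_left (le_of_abs_le h₂) ha
  linarith

theorem two_div_add_mul_sub_one_eq {a b : ℝ} (hab : b + a ≠ 0) :
    2 / (b + a) * b - 1 = (b - a) / (b + a) := by
  field_simp
  ring

theorem abs_two_div_add_mul_sub_one_le {a b μ : ℝ} (hab : 0 < b + a) (ha : a ≤ μ) (hb : μ ≤ b) :
    |2 / (b + a) * μ - 1| ≤ (b - a) / (b + a) := by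
  rw [show 2 / (b + a) * μ - 1 = (2 * μ - b - a) / (b + a) by field_simp; ring, abs_div,
    abs_of_pos hab, div_le_div_iff_of_pos_right hab, abs_le]
  constructor <;> linarith

theorem sin_phi_formula_general {n : ℕ} (A : Matrix (Fin n) (Fin n) ℝ)
    (hPD : A.PosDef) (lam1 lamn : ℝ)
    (h1 : IsEigenvalue A lam1) (hn : IsEigenvalue A lamn)
    (hbound : ∀ μ, IsEigenvalue A μ → lam1 ≤ μ ∧ μ ≤ lamn) :
    IsLeast {r : ℝ | ∃ ε : ℝ, 0 < ε ∧ r = ‖ε • A - 1‖}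
      ((lamn - lam1) / (lamn + lam1)) := by
  have hlam1 : 0 < lam1 := h1.pos hPD
  have hle : lam1 ≤ lamn := (hbound lamn hn).1
  have hsum : 0 < lamn + lam1 := by linarith
  have hc : 0 ≤ (lamn - lam1) / (lamn + lam1) := div_nonneg (by linarith) hsum.le
  have hε₀ : 2 / (lamn + lam1) ≠ 0 := by positivity
  refine ⟨⟨2 / (lamn + lam1), by positivity, le_antisymm ?_ ?_⟩, ?_⟩
  · have h := ((isEigenvalue_smul_sub_one_iff hε₀).mpr hn).abs_le_l2_opNorm
    rwa [two_div_add_mul_sub_one_eq hsum.ne', abs_of_nonneg hc] at h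
  · refine Matrix.l2_opNorm_le_of_forall_mem_spectrum
      (((IsSelfAdjoint.all _).smul hPD.isHermitian.isSelfAdjoint).sub (.one _)) hc fun ν hν => ?_
    obtain ⟨μ, hμ, rfl⟩ := (isEigenvalue_iff_mem_spectrum.mpr hν).exists_of_smul_sub_one hε₀
    exact abs_two_div_add_mul_sub_one_le hsum (hbound μ hμ).1 (hbound μ hμ).2
  · rintro r ⟨ε, hε, rfl⟩
    exact sub_div_add_le_of_abs_mul_sub_one_le hlam1.le (hlam1.trans_le hle).le hsum
      ((isEigenvalue_smul_sub_one_iff hε.ne').mpr h1).abs_le_l2_opNorm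
      ((isEigenvalue_smul_sub_one_iff hε.ne').mpr hn).abs_le_l2_opNorm

theorem sin_phi_formula {n : ℕ} (A : Matrix (Fin n) (Fin n) ℝ)
    (hSymm : A.IsSymm) (hPD : A.PosDef) (lam1 lamn : ℝ)
    (h1 : IsEigenvalue A lam1) (hn : IsEigenvalue A lamn)
    (hbound : ∀ μ, IsEigenvalue A μ → lam1 ≤ μ ∧ μ ≤ lamn) :
    IsLeast {r : ℝ | ∃ ε : ℝ, 0 < ε ∧ r = ‖ε • A - 1‖}
      ((lamn - lam1) / (lamn + lam1)) :=
  sin_phi_formula_general A hPD lam1 lamn h1 hn hbound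
end

section
/- Let A be a real symmetric positive definite n×n matrix with λ₁ < λₙ, and let x₁, xₙ be unit eigenvectors for λ₁, λₙ respectively. Then the vectors x± = (λₙ/(λ₁+λₙ))^{1/2} x₁ ± (λ₁/(λ₁+λₙ))^{1/2} xₙ are unit vectors that attain the minimum of ⟨Ax,x⟩/(‖Ax‖‖x‖) over nonzero x, with value 2√(λ₁λₙ)/(λ₁+λₙ). -/
open scoped Matrix.Norms.L2Operator RealInnerProductSpace

/-!
Since the spectrum of `A` lies in `[λ₁, λₙ]`, expanding in an eigenbasis gives
`⟪λₙ y - A y, A y - λ₁ y⟫ ≥ 0` for every `y`, i.e.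
`(λ₁ + λₙ) ⟪A y, y⟫ ≥ ‖A y‖² + λ₁ λₙ ‖y‖²`, and AM-GM bounds the right side below by
`2 √(λ₁ λₙ) ‖A y‖ ‖y‖`. On `x±` both inequalities are equalities: in the orthonormal pair
`x₁, xₙ` one computes `‖x±‖ = 1`, `⟪A x±, x±⟫ = 2 λ₁ λₙ / (λ₁ + λₙ)` and `‖A x±‖ = √(λ₁ λₙ)`.
-/

open Module.End

section

variable {E : Type*} [NormedAddCommGroup E] [InnerProductSpace ℝ E]

theorem div_le_inner_div_of_inner_sub_smul_nonneg {lam1 lamn : ℝ} (h1 : 0 < lam1)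
    (hn : 0 < lamn) {u y : E} (hy : y ≠ 0) (h : 0 ≤ ⟪lamn • y - u, u - lam1 • y⟫) :
    2 * √(lam1 * lamn) / (lam1 + lamn) ≤ ⟪u, y⟫ / (‖u‖ * ‖y‖) := by
  have hexpand : ⟪lamn • y - u, u - lam1 • y⟫
      = (lam1 + lamn) * ⟪u, y⟫ - ‖u‖ ^ 2 - lam1 * lamn * ‖y‖ ^ 2 := by
    simp only [inner_sub_left, inner_sub_right, real_inner_smul_left, real_inner_smul_right,
      real_inner_comm u y, real_inner_self_eq_norm_sq]
    ring
  have hamgm : 2 * √(lam1 * lamn) * (‖u‖ * ‖y‖) ≤ ‖u‖ ^ 2 + lam1 * lamn * ‖y‖ ^ 2 := by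
    nlinarith [sq_nonneg (‖u‖ - √(lam1 * lamn) * ‖y‖),
      Real.mul_self_sqrt (mul_pos h1 hn).le]
  have hy' : 0 < ‖y‖ := norm_pos_iff.2 hy
  have hinner : 0 < ⟪u, y⟫ := by
    nlinarith [mul_pos (mul_pos h1 hn) (pow_pos hy' 2), sq_nonneg ‖u‖]
  have hu : 0 < ‖u‖ := norm_pos_iff.2 fun hu => by simp [hu] at hinner
  rw [div_le_div_iff₀ (by positivity) (by positivity)]
  linarith

theorem LinearMap.IsSymmetric.inner_smul_sub_apply_apply_sub_smul_nonneg
    [FiniteDimensional ℝ E] {T : E →ₗ[ℝ] E} (hT : T.IsSymmetric) {lam1 lamn : ℝ}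
    (hbound : ∀ μ, HasEigenvalue T μ → μ ∈ Set.Icc lam1 lamn) (y : E) :
    0 ≤ ⟪lamn • y - T y, T y - lam1 • y⟫ := by
  set b := hT.eigenvectorBasis rfl
  set μ := hT.eigenvalues rfl
  rw [← b.sum_inner_mul_inner]
  refine Finset.sum_nonneg fun i _ => ?_
  have hb : T (b i) = μ i • b i := hT.apply_eigenvectorBasis rfl i
  have hleft : ⟪lamn • y - T y, b i⟫ = (lamn - μ i) * ⟪y, b i⟫ := by
    rw [inner_sub_left, real_inner_smul_left, hT, hb, real_inner_smul_right]
    ring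
  have hright : ⟪b i, T y - lam1 • y⟫ = (μ i - lam1) * ⟪y, b i⟫ := by
    rw [inner_sub_right, real_inner_smul_right, ← hT, hb, real_inner_smul_left,
      real_inner_comm y]
    ring
  obtain ⟨hlo, hhi⟩ := hbound _ (hT.hasEigenvalue_eigenvalues rfl i)
  calc (0 : ℝ) ≤ (lamn - μ i) * (μ i - lam1) * ⟪y, b i⟫ ^ 2 :=
        mul_nonneg (mul_nonneg (sub_nonneg.2 hhi) (sub_nonneg.2 hlo)) (sq_nonneg _)
    _ = ⟪lamn • y - T y, b i⟫ * ⟪b i, T y - lam1 • y⟫ := by rw [hleft, hright]; ring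

theorem inner_smul_add_smul_smul_add_smul {u v : E} (hu : ‖u‖ = 1) (hv : ‖v‖ = 1)
    (huv : ⟪u, v⟫ = 0) (a b c d : ℝ) :
    ⟪a • u + b • v, c • u + d • v⟫ = a * c + b * d := by
  have hvu : ⟪v, u⟫ = 0 := by rw [real_inner_comm, huv]
  simp only [inner_add_left, inner_add_right, real_inner_smul_left, real_inner_smul_right,
    real_inner_self_eq_norm_sq, hu, hv, huv, hvu]
  ring

noncomputable def antieigenvector (lam1 lamn s : ℝ) (x1 xn : E) : E :=
  √(lamn / (lam1 + lamn)) • x1 + (s * √(lam1 / (lam1 + lamn))) • xn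

section antieigenvector

variable {lam1 lamn s : ℝ} {x1 xn : E}

theorem norm_antieigenvector (h1 : 0 < lam1) (hn : 0 < lamn) (hs : s ^ 2 = 1)
    (hx1 : ‖x1‖ = 1) (hxn : ‖xn‖ = 1) (horth : ⟪x1, xn⟫ = 0) :
    ‖antieigenvector lam1 lamn s x1 xn‖ = 1 := by
  rw [norm_eq_sqrt_real_inner, antieigenvector, inner_smul_add_smul_smul_add_smul hx1 hxn horth,
    ← sq, ← sq, mul_pow, hs, Real.sq_sqrt (by positivity), Real.sq_sqrt (by positivity),
    one_mul, ← add_div, add_comm, div_self (by positivity), Real.sqrt_one]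

theorem inner_div_norm_mul_norm_antieigenvector {T : E →ₗ[ℝ] E} (h1 : 0 < lam1) (hn : 0 < lamn)
    (hs : s ^ 2 = 1) (hx1 : ‖x1‖ = 1) (hxn : ‖xn‖ = 1) (horth : ⟪x1, xn⟫ = 0)
    (hex1 : T x1 = lam1 • x1) (hexn : T xn = lamn • xn) :
    ⟪T (antieigenvector lam1 lamn s x1 xn), antieigenvector lam1 lamn s x1 xn⟫ /
        (‖T (antieigenvector lam1 lamn s x1 xn)‖ * ‖antieigenvector lam1 lamn s x1 xn‖) =
      2 * √(lam1 * lamn) / (lam1 + lamn) := by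
  set p := √(lamn / (lam1 + lamn))
  set q := s * √(lam1 / (lam1 + lamn))
  have hp : p ^ 2 = lamn / (lam1 + lamn) := Real.sq_sqrt (by positivity)
  have hq : q ^ 2 = lam1 / (lam1 + lamn) := by
    rw [mul_pow, hs, one_mul, Real.sq_sqrt (by positivity)]
  have hTx : T (antieigenvector lam1 lamn s x1 xn) = (lam1 * p) • x1 + (lamn * q) • xn := by
    rw [antieigenvector, map_add, map_smul, map_smul, hex1, hexn, smul_smul, smul_smul,
      mul_comm p, mul_comm q]
  have hinner : ⟪T (antieigenvector lam1 lamn s x1 xn), antieigenvector lam1 lamn s x1 xn⟫ =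
      2 * (lam1 * lamn) / (lam1 + lamn) := by
    rw [hTx, antieigenvector, inner_smul_add_smul_smul_add_smul hx1 hxn horth]
    linear_combination lam1 * hp + lamn * hq
  have hnorm : ‖T (antieigenvector lam1 lamn s x1 xn)‖ = √(lam1 * lamn) := by
    rw [norm_eq_sqrt_real_inner, hTx, inner_smul_add_smul_smul_add_smul hx1 hxn horth]
    congr 1
    calc lam1 * p * (lam1 * p) + lamn * q * (lamn * q)
        = lam1 ^ 2 * p ^ 2 + lamn ^ 2 * q ^ 2 := by ring
      _ = lam1 * lamn := by
          rw [hp, hq]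
          field_simp
  rw [hinner, hnorm, norm_antieigenvector h1 hn hs hx1 hxn horth, mul_one,
    div_div, div_eq_div_iff (by positivity) (by positivity)]
  nlinarith [Real.mul_self_sqrt (mul_pos h1 hn).le]

end antieigenvector

end

theorem Matrix.PosDef.inner_toEuclideanLin_self_pos_s4 {ι : Type*} [Fintype ι] [DecidableEq ι]
    {A : Matrix ι ι ℝ} (hA : A.PosDef) {x : EuclideanSpace ℝ ι} (hx : x ≠ 0) :
    0 < ⟪A.toEuclideanLin x, x⟫ := by
  have h := hA.dotProduct_mulVec_pos (x := WithLp.equiv 2 _ x) (by simpa using hx)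
  rw [real_inner_comm, EuclideanSpace.inner_eq_star_dotProduct]
  simpa [Matrix.toLpLin_apply, dotProduct_comm] using h

theorem isEigenvalue_of_hasEigenvalue {n : ℕ} {A : Matrix (Fin n) (Fin n) ℝ} {μ : ℝ}
    (h : HasEigenvalue A.toEuclideanLin μ) : IsEigenvalue A μ := by
  obtain ⟨x, hx, hx0⟩ := h.exists_hasEigenvector
  exact ⟨x, hx0, mem_eigenspace_iff.1 hx⟩

theorem antieigenvectors_attain_min_general {n : ℕ} (A : Matrix (Fin n) (Fin n) ℝ)
    (hPD : A.PosDef) (lam1 lamn : ℝ) (hlt : lam1 < lamn)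
    (hbound : ∀ μ, IsEigenvalue A μ → lam1 ≤ μ ∧ μ ≤ lamn)
    (x1 xn : EuclideanSpace ℝ (Fin n)) (hx1 : ‖x1‖ = 1) (hxn : ‖xn‖ = 1)
    (hex1 : Matrix.toEuclideanLin A x1 = lam1 • x1)
    (hexn : Matrix.toEuclideanLin A xn = lamn • xn) :
    ∀ s : ℝ, s = 1 ∨ s = -1 →
      let xpm : EuclideanSpace ℝ (Fin n) :=
        Real.sqrt (lamn / (lam1 + lamn)) • x1 + (s * Real.sqrt (lam1 / (lam1 + lamn))) • xn
      ‖xpm‖ = 1 ∧ rq A xpm = 2 * Real.sqrt (lam1 * lamn) / (lam1 + lamn) ∧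
        ∀ y : EuclideanSpace ℝ (Fin n), y ≠ 0 → rq A xpm ≤ rq A y := by
  intro s hs
  change ‖antieigenvector lam1 lamn s x1 xn‖ = 1 ∧
    rq A (antieigenvector lam1 lamn s x1 xn) = _ ∧
    ∀ y, y ≠ 0 → rq A (antieigenvector lam1 lamn s x1 xn) ≤ rq A y
  have hT := Matrix.isSymmetric_toEuclideanLin_iff.2 hPD.1
  have h1 : 0 < lam1 := by
    have := hPD.inner_toEuclideanLin_self_pos_s4 (x := x1) (norm_ne_zero_iff.1 (by simp [hx1]))
    rwa [hex1, real_inner_smul_left, real_inner_self_eq_norm_sq, hx1, one_pow, mul_one] at this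
  have hn : 0 < lamn := h1.trans hlt
  have hs2 : s ^ 2 = 1 := by rcases hs with rfl | rfl <;> norm_num
  have horth : ⟪x1, xn⟫ = 0 :=
    hT.orthogonalFamily_eigenspaces hlt.ne ⟨x1, mem_eigenspace_iff.2 hex1⟩
      ⟨xn, mem_eigenspace_iff.2 hexn⟩
  have hrq : rq A (antieigenvector lam1 lamn s x1 xn) = 2 * √(lam1 * lamn) / (lam1 + lamn) :=
    inner_div_norm_mul_norm_antieigenvector h1 hn hs2 hx1 hxn horth hex1 hexn
  refine ⟨norm_antieigenvector h1 hn hs2 hx1 hxn horth, hrq, fun y hy => hrq ▸ ?_⟩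
  exact div_le_inner_div_of_inner_sub_smul_nonneg h1 hn hy
    (hT.inner_smul_sub_apply_apply_sub_smul_nonneg
      (fun μ hμ => hbound μ (isEigenvalue_of_hasEigenvalue hμ)) y)

theorem antieigenvectors_attain_min {n : ℕ} (A : Matrix (Fin n) (Fin n) ℝ)
    (hSymm : A.IsSymm) (hPD : A.PosDef) (lam1 lamn : ℝ) (hlt : lam1 < lamn)
    (hbound : ∀ μ, IsEigenvalue A μ → lam1 ≤ μ ∧ μ ≤ lamn)
    (x1 xn : EuclideanSpace ℝ (Fin n)) (hx1 : ‖x1‖ = 1) (hxn : ‖xn‖ = 1)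
    (hex1 : Matrix.toEuclideanLin A x1 = lam1 • x1)
    (hexn : Matrix.toEuclideanLin A xn = lamn • xn) :
    ∀ s : ℝ, s = 1 ∨ s = -1 →
      let xpm : EuclideanSpace ℝ (Fin n) :=
        Real.sqrt (lamn / (lam1 + lamn)) • x1 + (s * Real.sqrt (lam1 / (lam1 + lamn))) • xn
      ‖xpm‖ = 1 ∧ rq A xpm = 2 * Real.sqrt (lam1 * lamn) / (lam1 + lamn) ∧
        ∀ y : EuclideanSpace ℝ (Fin n), y ≠ 0 → rq A xpm ≤ rq A y :=
  antieigenvectors_attain_min_general A hPD lam1 lamn hlt hbound x1 xn hx1 hxn hex1 hexn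
end

section
/- For a 2×2 real symmetric positive definite matrix Σ with eigenvalues σ₁ ≥ σ₂ > 0, the minimum over ε > 0 of ‖εΣ − I‖ equals (σ₁−σ₂)/(σ₁+σ₂), i.e. sin φ(Σ) = τ/σ with σ = (σ₁+σ₂)/2 and τ = (σ₁−σ₂)/2. -/
open scoped Matrix.Norms.L2Operator RealInnerProductSpace

/-!
For a symmetric `S`, the spectral theorem and unitary invariance of the L2 operator norm give
`‖ε • S - 1‖ = max (|ε σ₁ - 1|, |ε σ₂ - 1|)`. Since
`σ₂ (ε σ₁ - 1) + σ₁ (1 - ε σ₂) = σ₁ - σ₂` for every `ε`, this maximum is at least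
`(σ₁ - σ₂) / (σ₁ + σ₂)`, with equality at `ε = 2 / (σ₁ + σ₂)`, where `ε σ₁ - 1 = -(ε σ₂ - 1)`.
-/

theorem Matrix.IsHermitian.l2_opNorm_eq_norm_eigenvalues {𝕜 n : Type*} [RCLike 𝕜] [Fintype n]
    [DecidableEq n] {A : Matrix n n 𝕜} (hA : A.IsHermitian) :
    ‖A‖ = ‖(RCLike.ofReal ∘ hA.eigenvalues : n → 𝕜)‖ := by
  conv_lhs => rw [hA.spectral_theorem]
  rw [Unitary.conjStarAlgAut_apply, ← Unitary.coe_star, CStarRing.norm_mul_coe_unitary,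
    CStarRing.norm_coe_unitary_mul, l2_opNorm_diagonal]

theorem Matrix.IsHermitian.smul_sub_one {n : Type*} [DecidableEq n] {A : Matrix n n ℝ}
    (hA : A.IsHermitian) (ε : ℝ) : (ε • A - 1).IsHermitian :=
  (hA.smul (IsSelfAdjoint.all ε)).sub Matrix.isHermitian_one

theorem Matrix.toEuclideanLin_smul_sub_one {n : Type*} [Fintype n] [DecidableEq n]
    (A : Matrix n n ℝ) (ε : ℝ) (x : EuclideanSpace ℝ n) :
    Matrix.toEuclideanLin (ε • A - 1) x = ε • Matrix.toEuclideanLin A x - x := by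
  simp

namespace IsEigenvalue

variable {n : ℕ} {A : Matrix (Fin n) (Fin n) ℝ}

theorem abs_le_norm {μ : ℝ} (h : IsEigenvalue A μ) : |μ| ≤ ‖A‖ := by
  obtain ⟨x, hx, hAx⟩ := h
  have hle : ‖Matrix.toEuclideanLin A x‖ ≤ ‖A‖ * ‖x‖ :=
    (Matrix.toEuclideanCLM (𝕜 := ℝ) A).le_opNorm x
  rw [hAx, norm_smul, Real.norm_eq_abs] at hle
  exact le_of_mul_le_mul_right hle (norm_pos_iff.mpr hx)

theorem smul_sub_one {μ : ℝ} (h : IsEigenvalue A μ) (ε : ℝ) :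
    IsEigenvalue (ε • A - 1) (ε * μ - 1) := by
  obtain ⟨x, hx, hAx⟩ := h
  refine ⟨x, hx, ?_⟩
  rw [Matrix.toEuclideanLin_smul_sub_one, hAx, smul_smul, sub_smul, one_smul]

theorem of_smul_sub_one {ε ν : ℝ} (hε : ε ≠ 0) (h : IsEigenvalue (ε • A - 1) ν) :
    IsEigenvalue A ((ν + 1) / ε) := by
  obtain ⟨x, hx, hAx⟩ := h
  refine ⟨x, hx, ?_⟩
  rw [Matrix.toEuclideanLin_smul_sub_one, sub_eq_iff_eq_add] at hAx
  rw [div_eq_inv_mul, mul_smul, eq_inv_smul_iff₀ hε, hAx, add_smul, one_smul]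

end IsEigenvalue

namespace Matrix.IsHermitian

variable {n : ℕ} {A : Matrix (Fin n) (Fin n) ℝ}

theorem isEigenvalue_eigenvalues (hA : A.IsHermitian) (i : Fin n) :
    IsEigenvalue A (hA.eigenvalues i) :=
  ⟨hA.eigenvectorBasis i, hA.eigenvectorBasis.orthonormal.ne_zero i,
    by simpa [toLpLin_apply] using congrArg (WithLp.toLp 2) (hA.mulVec_eigenvectorBasis i)⟩

theorem norm_le_of_forall_isEigenvalue (hA : A.IsHermitian) {c : ℝ} (hc : 0 ≤ c)
    (h : ∀ μ, IsEigenvalue A μ → |μ| ≤ c) : ‖A‖ ≤ c := by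
  rw [hA.l2_opNorm_eq_norm_eigenvalues, pi_norm_le_iff_of_nonneg hc]
  exact fun i ↦ h _ (hA.isEigenvalue_eigenvalues i)

end Matrix.IsHermitian

section

variable {n : ℕ} {A : Matrix (Fin n) (Fin n) ℝ} {σ1 σ2 : ℝ}

theorem sub_div_add_le_norm_smul_sub_one (h1 : IsEigenvalue A σ1) (h2 : IsEigenvalue A σ2)
    (hσ1 : 0 ≤ σ1) (hσ2 : 0 ≤ σ2) (ε : ℝ) : (σ1 - σ2) / (σ1 + σ2) ≤ ‖ε • A - 1‖ := by
  rcases (add_nonneg hσ1 hσ2).eq_or_lt with hsum | hsum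
  · rw [← hsum, div_zero]
    exact norm_nonneg _
  have e1 := (le_abs_self _).trans (h1.smul_sub_one ε).abs_le_norm
  have e2 := (neg_le_abs _).trans (h2.smul_sub_one ε).abs_le_norm
  rw [div_le_iff₀ hsum]
  calc σ1 - σ2 = σ2 * (ε * σ1 - 1) + σ1 * -(ε * σ2 - 1) := by ring
    _ ≤ σ2 * ‖ε • A - 1‖ + σ1 * ‖ε • A - 1‖ := by gcongr
    _ = ‖ε • A - 1‖ * (σ1 + σ2) := by ring

theorem norm_two_div_add_smul_sub_one_le (hA : A.IsHermitian) (hσ : σ2 ≤ σ1)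
    (hsum : 0 < σ1 + σ2) (hspec : ∀ μ, IsEigenvalue A μ → σ2 ≤ μ ∧ μ ≤ σ1) :
    ‖(2 / (σ1 + σ2)) • A - 1‖ ≤ (σ1 - σ2) / (σ1 + σ2) := by
  refine (hA.smul_sub_one _).norm_le_of_forall_isEigenvalue
    (div_nonneg (sub_nonneg.2 hσ) hsum.le) fun ν hν ↦ ?_
  obtain ⟨hlo, hhi⟩ := hspec _ (hν.of_smul_sub_one (by positivity))
  rw [div_div_eq_mul_div, le_div_iff₀ two_pos] at hlo
  rw [div_div_eq_mul_div, div_le_iff₀ two_pos] at hhi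
  rw [abs_le, ← neg_div, div_le_iff₀ hsum, le_div_iff₀ hsum]
  constructor <;> linarith

end

theorem sin_phi_two_by_two_general {S : Matrix (Fin 2) (Fin 2) ℝ}
    (hSymm : S.IsSymm) (σ1 σ2 : ℝ)
    (hσ : σ1 ≥ σ2) (hσ2 : σ2 > 0)
    (h1 : IsEigenvalue S σ1) (h2 : IsEigenvalue S σ2)
    (hall : ∀ μ, IsEigenvalue S μ → μ = σ1 ∨ μ = σ2) :
    IsLeast {r : ℝ | ∃ ε : ℝ, 0 < ε ∧ r = ‖ε • S - 1‖}
      ((σ1 - σ2) / (σ1 + σ2)) ∧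
    (σ1 - σ2) / (σ1 + σ2) = ((σ1 - σ2) / 2) / ((σ1 + σ2) / 2) := by
  have hS : S.IsHermitian := Matrix.isHermitian_iff_isSymm.mpr hSymm
  have hσ1 : 0 < σ1 := hσ2.trans_le hσ
  have hsum : 0 < σ1 + σ2 := add_pos hσ1 hσ2
  have hspec : ∀ μ, IsEigenvalue S μ → σ2 ≤ μ ∧ μ ≤ σ1 := fun μ hμ ↦ by
    rcases hall μ hμ with rfl | rfl <;> constructor <;> linarith
  have lower : ∀ ε : ℝ, (σ1 - σ2) / (σ1 + σ2) ≤ ‖ε • S - 1‖ :=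
    sub_div_add_le_norm_smul_sub_one h1 h2 hσ1.le hσ2.le
  refine ⟨⟨⟨2 / (σ1 + σ2), by positivity, ?_⟩, ?_⟩, by field_simp⟩
  · exact (norm_two_div_add_smul_sub_one_le hS hσ hsum hspec).antisymm (lower _) |>.symm
  · rintro r ⟨ε, -, rfl⟩
    exact lower ε

theorem sin_phi_two_by_two {S : Matrix (Fin 2) (Fin 2) ℝ}
    (hSymm : S.IsSymm) (hPD : S.PosDef) (σ1 σ2 : ℝ)
    (hσ : σ1 ≥ σ2) (hσ2 : σ2 > 0)
    (h1 : IsEigenvalue S σ1) (h2 : IsEigenvalue S σ2)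
    (hall : ∀ μ, IsEigenvalue S μ → μ = σ1 ∨ μ = σ2) :
    IsLeast {r : ℝ | ∃ ε : ℝ, 0 < ε ∧ r = ‖ε • S - 1‖}
      ((σ1 - σ2) / (σ1 + σ2)) ∧
    (σ1 - σ2) / (σ1 + σ2) = ((σ1 - σ2) / 2) / ((σ1 + σ2) / 2) :=
  sin_phi_two_by_two_general hSymm σ1 σ2 hσ hσ2 h1 h2 hall
end

section
/- For positive reals r₁, r₂, the quantity G = 2√(r₁r₂)/(r₁+r₂) equals the first antieigenvalue μ₁ = min_{x≠0} ⟨Ax,x⟩/(‖Ax‖‖x‖) of the 2×2 diagonal matrix A = diag(r₁, r₂). -/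
open scoped Matrix.Norms.L2Operator RealInnerProductSpace

section Diagonal

variable {ι : Type*} [Fintype ι] [DecidableEq ι] (d : ι → ℝ) (x : EuclideanSpace ℝ ι)

theorem toEuclideanLin_diagonal_apply (i : ι) :
    Matrix.toEuclideanLin (Matrix.diagonal d) x i = d i * x i := by
  simp [Matrix.toEuclideanLin, Matrix.mulVec_diagonal]

theorem inner_toEuclideanLin_diagonal_self :
    ⟪Matrix.toEuclideanLin (Matrix.diagonal d) x, x⟫ = ∑ i, d i * x i ^ 2 := by
  simp only [PiLp.inner_apply, toEuclideanLin_diagonal_apply, RCLike.inner_apply, conj_trivial]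
  exact Finset.sum_congr rfl fun i _ => by ring

theorem norm_toEuclideanLin_diagonal_sq :
    ‖Matrix.toEuclideanLin (Matrix.diagonal d) x‖ ^ 2 = ∑ i, d i ^ 2 * x i ^ 2 := by
  simp only [EuclideanSpace.norm_sq_eq, toEuclideanLin_diagonal_apply, Real.norm_eq_abs, sq_abs,
    mul_pow]

theorem inner_toEuclideanLin_diagonal_self_pos (hd : ∀ i, 0 < d i) (hx : x ≠ 0) :
    0 < ⟪Matrix.toEuclideanLin (Matrix.diagonal d) x, x⟫ := by
  obtain ⟨i, hi⟩ : ∃ i, x i ≠ 0 := by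
    by_contra! h
    exact hx (PiLp.ext h)
  rw [inner_toEuclideanLin_diagonal_self]
  exact Finset.sum_pos' (fun j _ => mul_nonneg (hd j).le (sq_nonneg _))
    ⟨i, Finset.mem_univ i, mul_pos (hd i) (sq_pos_of_ne_zero hi)⟩

end Diagonal

section Rq

variable {n : ℕ} {A : Matrix (Fin n) (Fin n) ℝ} {x : EuclideanSpace ℝ (Fin n)} {c : ℝ}

theorem norm_toEuclideanLin_mul_norm_pos (hpos : 0 < ⟪Matrix.toEuclideanLin A x, x⟫) :
    0 < ‖Matrix.toEuclideanLin A x‖ * ‖x‖ :=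
  hpos.trans_le (real_inner_le_norm _ _)

theorem le_rq_of_sq_le (hpos : 0 < ⟪Matrix.toEuclideanLin A x, x⟫)
    (h : c ^ 2 * (‖Matrix.toEuclideanLin A x‖ ^ 2 * ‖x‖ ^ 2) ≤ ⟪Matrix.toEuclideanLin A x, x⟫ ^ 2) :
    c ≤ rq A x := by
  rw [rq, le_div_iff₀ (norm_toEuclideanLin_mul_norm_pos hpos)]
  refine (le_abs_self _).trans (abs_le_of_sq_le_sq ?_ hpos.le)
  rwa [mul_pow, mul_pow]

theorem rq_eq_of_sq_eq (hpos : 0 < ⟪Matrix.toEuclideanLin A x, x⟫) (hc : 0 ≤ c)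
    (h : c ^ 2 * (‖Matrix.toEuclideanLin A x‖ ^ 2 * ‖x‖ ^ 2) = ⟪Matrix.toEuclideanLin A x, x⟫ ^ 2) :
    rq A x = c := by
  have hN := norm_toEuclideanLin_mul_norm_pos hpos
  rw [rq, div_eq_iff hN.ne', eq_comm]
  refine (pow_left_inj₀ (by positivity) hpos.le two_ne_zero).mp ?_
  rwa [mul_pow, mul_pow]

end Rq

theorem kantorovich_two_identity (r1 r2 u v : ℝ) :
    4 * r1 * r2 * ((r1 ^ 2 * u + r2 ^ 2 * v) * (u + v)) =
      (r1 + r2) ^ 2 * (r1 * u + r2 * v) ^ 2 - ((r1 - r2) * (r1 * u - r2 * v)) ^ 2 := by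
  ring

theorem sq_mul_norm_sq_diagonal_two {r1 r2 : ℝ} (hr : 0 ≤ r1 * r2) (hsum : r1 + r2 ≠ 0)
    (x : EuclideanSpace ℝ (Fin 2)) :
    (2 * Real.sqrt (r1 * r2) / (r1 + r2)) ^ 2 *
        (‖Matrix.toEuclideanLin (Matrix.diagonal ![r1, r2]) x‖ ^ 2 * ‖x‖ ^ 2) =
      ⟪Matrix.toEuclideanLin (Matrix.diagonal ![r1, r2]) x, x⟫ ^ 2 -
        ((r1 - r2) * (r1 * x 0 ^ 2 - r2 * x 1 ^ 2) / (r1 + r2)) ^ 2 := by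
  rw [inner_toEuclideanLin_diagonal_self, norm_toEuclideanLin_diagonal_sq,
    EuclideanSpace.norm_sq_eq]
  simp only [Fin.sum_univ_two, Matrix.cons_val_zero, Matrix.cons_val_one, Real.norm_eq_abs,
    sq_abs, div_pow, mul_pow, Real.sq_sqrt hr]
  field_simp
  linear_combination kantorovich_two_identity r1 r2 (x 0 ^ 2) (x 1 ^ 2)

theorem sharpe_ratio_is_antieigenvalue (r1 r2 : ℝ) (hr1 : 0 < r1) (hr2 : 0 < r2) :
    IsLeast {r : ℝ | ∃ x : EuclideanSpace ℝ (Fin 2), x ≠ 0 ∧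
        r = rq (Matrix.diagonal ![r1, r2]) x}
      (2 * Real.sqrt (r1 * r2) / (r1 + r2)) := by
  have hd : ∀ i, 0 < ![r1, r2] i := Fin.forall_fin_two.mpr ⟨hr1, hr2⟩
  have hr : 0 ≤ r1 * r2 := by positivity
  have hsum : r1 + r2 ≠ 0 := by positivity
  constructor
  · have hx : !₂[Real.sqrt r2, Real.sqrt r1] ≠ 0 := fun h =>
      (Real.sqrt_pos.mpr hr2).ne' (by simpa using congrArg (· 0) h)
    refine ⟨_, hx, (rq_eq_of_sq_eq (inner_toEuclideanLin_diagonal_self_pos _ _ hd hx)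
      (by positivity) ?_).symm⟩
    rw [sq_mul_norm_sq_diagonal_two hr hsum]
    simp [Real.sq_sqrt hr1.le, Real.sq_sqrt hr2.le, mul_comm r1 r2]
  · rintro _ ⟨x, hx, rfl⟩
    refine le_rq_of_sq_le (inner_toEuclideanLin_diagonal_self_pos _ _ hd hx) ?_
    rw [sq_mul_norm_sq_diagonal_two hr hsum]
    exact sub_le_self _ (sq_nonneg _)
end

section
/- Let m > n > 0 be integers and A = diag(n², m²). The unit vectors x± = (1/√(m²+n²))·(m, ±n) attain the minimum of ⟨Ax,x⟩/(‖Ax‖‖x‖) over nonzero x in ℝ², with value 2mn/(m²+n²). -/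
open scoped Matrix.Norms.L2Operator RealInnerProductSpace

/-! For `A = diag(α², β²)` and `y = (a, b)` one has the identity
`((α² + β²)⟪Ay, y⟫)² - (2αβ‖Ay‖‖y‖)² = ((β² - α²)(α²a² - β²b²))²`,
the two-dimensional case of the Kantorovich inequality. It bounds the cosine
`⟪Ay, y⟫ / (‖Ay‖‖y‖)` below by `2αβ / (α² + β²)`, with equality when `α²a² = β²b²`;
for `α = n`, `β = m` the vectors `(m, ±n)` satisfy this. -/

open Matrix

lemma inner_toEuclideanLin_diagonal {n : ℕ} (d : Fin n → ℝ) (x : EuclideanSpace ℝ (Fin n)) :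
    ⟪toEuclideanLin (diagonal d) x, x⟫ = ∑ i, d i * x i ^ 2 := by
  simp only [PiLp.inner_apply, ofLp_toLpLin, toLin'_apply, mulVec_diagonal, RCLike.inner_apply,
    conj_trivial]
  exact Finset.sum_congr rfl fun i _ => by ring

lemma norm_sq_toEuclideanLin_diagonal {n : ℕ} (d : Fin n → ℝ) (x : EuclideanSpace ℝ (Fin n)) :
    ‖toEuclideanLin (diagonal d) x‖ ^ 2 = ∑ i, (d i * x i) ^ 2 := by
  simp only [EuclideanSpace.real_norm_sq_eq, ofLp_toLpLin, toLin'_apply, mulVec_diagonal]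

section Kantorovich

variable (α β : ℝ) (y : EuclideanSpace ℝ (Fin 2))

lemma kantorovich_defect_eq :
    ((α ^ 2 + β ^ 2) * ⟪toEuclideanLin (diagonal ![α ^ 2, β ^ 2]) y, y⟫) ^ 2
        - (2 * α * β * (‖toEuclideanLin (diagonal ![α ^ 2, β ^ 2]) y‖ * ‖y‖)) ^ 2
      = ((β ^ 2 - α ^ 2) * (α ^ 2 * y 0 ^ 2 - β ^ 2 * y 1 ^ 2)) ^ 2 := by
  rw [mul_pow _ (_ * _), mul_pow ‖_‖, norm_sq_toEuclideanLin_diagonal,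
    EuclideanSpace.real_norm_sq_eq, inner_toEuclideanLin_diagonal]
  simp only [Fin.sum_univ_two, cons_val_zero, cons_val_one]
  ring

lemma inner_toEuclideanLin_diagonal_sq_nonneg :
    0 ≤ ⟪toEuclideanLin (diagonal ![α ^ 2, β ^ 2]) y, y⟫ := by
  rw [inner_toEuclideanLin_diagonal, Fin.sum_univ_two]
  simp only [cons_val_zero, cons_val_one]
  positivity

lemma two_mul_mul_norm_mul_norm_le_inner :
    2 * α * β * (‖toEuclideanLin (diagonal ![α ^ 2, β ^ 2]) y‖ * ‖y‖)
      ≤ (α ^ 2 + β ^ 2) * ⟪toEuclideanLin (diagonal ![α ^ 2, β ^ 2]) y, y⟫ := by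
  refine le_trans (le_abs_self _) (abs_le_of_sq_le_sq ?_ ?_)
  · linarith [kantorovich_defect_eq α β y,
      sq_nonneg ((β ^ 2 - α ^ 2) * (α ^ 2 * y 0 ^ 2 - β ^ 2 * y 1 ^ 2))]
  · exact mul_nonneg (by positivity) (inner_toEuclideanLin_diagonal_sq_nonneg α β y)

variable {α β y}

lemma inner_toEuclideanLin_diagonal_sq_pos (hα : α ≠ 0) (hβ : β ≠ 0) (hy : y ≠ 0) :
    0 < ⟪toEuclideanLin (diagonal ![α ^ 2, β ^ 2]) y, y⟫ := by
  have hy' : y 0 ≠ 0 ∨ y 1 ≠ 0 := by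
    by_contra! h
    exact hy (by ext i; fin_cases i <;> simp [h.1, h.2])
  rw [inner_toEuclideanLin_diagonal, Fin.sum_univ_two]
  simp only [cons_val_zero, cons_val_one]
  rcases hy' with h | h
  · have : 0 < α ^ 2 * y 0 ^ 2 := by positivity
    positivity
  · have : 0 < β ^ 2 * y 1 ^ 2 := by positivity
    positivity

lemma norm_toEuclideanLin_diagonal_sq_mul_norm_pos (hα : α ≠ 0) (hβ : β ≠ 0) (hy : y ≠ 0) :
    0 < ‖toEuclideanLin (diagonal ![α ^ 2, β ^ 2]) y‖ * ‖y‖ := by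
  have h_inner := inner_toEuclideanLin_diagonal_sq_pos hα hβ hy
  have hAy : toEuclideanLin (diagonal ![α ^ 2, β ^ 2]) y ≠ 0 := by
    intro h
    simp [h] at h_inner
  positivity

lemma div_le_rq_diagonal_sq (hα : α ≠ 0) (hβ : β ≠ 0) (hy : y ≠ 0) :
    2 * α * β / (α ^ 2 + β ^ 2) ≤ rq (diagonal ![α ^ 2, β ^ 2]) y := by
  rw [rq, div_le_div_iff₀ (by positivity) (norm_toEuclideanLin_diagonal_sq_mul_norm_pos hα hβ hy),
    mul_comm _ (α ^ 2 + β ^ 2)]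
  exact two_mul_mul_norm_mul_norm_le_inner α β y

lemma rq_diagonal_sq_eq (hα : α ≠ 0) (hβ : β ≠ 0) (hαβ : 0 ≤ α * β) (hy : y ≠ 0)
    (h_eq : α ^ 2 * y 0 ^ 2 = β ^ 2 * y 1 ^ 2) :
    rq (diagonal ![α ^ 2, β ^ 2]) y = 2 * α * β / (α ^ 2 + β ^ 2) := by
  have h_sq := kantorovich_defect_eq α β y
  rw [h_eq, sub_self, mul_zero, zero_pow two_ne_zero, sub_eq_zero,
    sq_eq_sq₀ (mul_nonneg (by positivity) (inner_toEuclideanLin_diagonal_sq_nonneg α β y))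
      (mul_nonneg (by linarith) (norm_toEuclideanLin_diagonal_sq_mul_norm_pos hα hβ hy).le)] at h_sq
  rw [rq, div_eq_div_iff (norm_toEuclideanLin_diagonal_sq_mul_norm_pos hα hβ hy).ne'
    (by positivity), mul_comm, h_sq]

end Kantorovich

theorem pythagorean_antieigenvectors (m n : ℕ) (hn : 0 < n) (hmn : n < m) :
    ∀ s : ℝ, s = 1 ∨ s = -1 →
      let A : Matrix (Fin 2) (Fin 2) ℝ := Matrix.diagonal ![(n : ℝ) ^ 2, (m : ℝ) ^ 2]
      let xpm : EuclideanSpace ℝ (Fin 2) :=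
        (1 / Real.sqrt ((m : ℝ) ^ 2 + (n : ℝ) ^ 2)) •
          (WithLp.equiv 2 (Fin 2 → ℝ)).symm ![(m : ℝ), s * n]
      ‖xpm‖ = 1 ∧ rq A xpm = 2 * m * n / ((m : ℝ) ^ 2 + (n : ℝ) ^ 2) ∧
        ∀ y : EuclideanSpace ℝ (Fin 2), y ≠ 0 → rq A xpm ≤ rq A y := by
  intro s hs A xpm
  have hn₀ : (n : ℝ) ≠ 0 := by positivity
  have hm₀ : (m : ℝ) ≠ 0 := by have : 0 < m := hn.trans hmn; positivity
  have hs2 : s ^ 2 = 1 := by rcases hs with rfl | rfl <;> norm_num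
  set r := Real.sqrt ((m : ℝ) ^ 2 + (n : ℝ) ^ 2)
  have hr2 : r ^ 2 = (m : ℝ) ^ 2 + (n : ℝ) ^ 2 := Real.sq_sqrt (by positivity)
  have hr : r ≠ 0 := by positivity
  have hx0 : xpm 0 = m / r := by simp [xpm, r, div_eq_inv_mul]
  have hx1 : xpm 1 = s * n / r := by simp [xpm, r, div_eq_inv_mul]
  have h_norm : ‖xpm‖ = 1 := by
    rw [← pow_eq_one_iff_of_nonneg (norm_nonneg _) two_ne_zero, EuclideanSpace.real_norm_sq_eq,
      Fin.sum_univ_two, hx0, hx1, div_pow, div_pow, mul_pow, hs2, hr2]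
    field_simp
  have h_val : rq A xpm = 2 * m * n / ((m : ℝ) ^ 2 + (n : ℝ) ^ 2) := by
    refine (rq_diagonal_sq_eq hn₀ hm₀ (by positivity) ?_ ?_).trans (by ring)
    · exact norm_ne_zero_iff.mp (h_norm ▸ one_ne_zero)
    · rw [hx0, hx1, div_pow, div_pow, mul_pow, hs2]
      ring
  refine ⟨h_norm, h_val, fun y hy => ?_⟩
  rw [h_val]
  exact (div_le_rq_diagonal_sq hn₀ hm₀ hy).trans_eq' (by ring)
end

section
/- Let A be a real symmetric positive definite n×n matrix with λ₁ < λₙ and x₁, xₙ orthonormal eigenvectors for λ₁, λₙ. For the antieigenvector x₊ = (λₙ/(λ₁+λₙ))^{1/2} x₁ + (λ₁/(λ₁+λₙ))^{1/2} xₙ, the angle between x₊ and A x₊ satisfies cos(angle) = 2√(λ₁λₙ)/(λ₁+λₙ), i.e. ⟨A x₊, x₊⟩ = (2√(λ₁λₙ)/(λ₁+λₙ))·‖A x₊‖·‖x₊‖. -/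
/-!
Write `x₊ = a x₁ + b xₙ` with `a² = λₙ/(λ₁+λₙ)` and `b² = λ₁/(λ₁+λₙ)`. By orthonormality
`‖x₊‖² = a² + b² = 1`, `‖A x₊‖² = a²λ₁² + b²λₙ² = λ₁λₙ` and `⟪A x₊, x₊⟫ = a²λ₁ + b²λₙ =
2λ₁λₙ/(λ₁+λₙ)`, which is the claim. Positive definiteness makes `λ₁, λₙ > 0`, so that the square
roots are genuine.
-/

open scoped Matrix.Norms.L2Operator RealInnerProductSpace

theorem Matrix.PosDef.pos_of_toEuclideanLin_eq_smul {ι : Type*} [Fintype ι] [DecidableEq ι]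
    {A : Matrix ι ι ℝ} (hA : A.PosDef) {μ : ℝ} {x : EuclideanSpace ℝ ι} (hx : x ≠ 0)
    (hμ : Matrix.toEuclideanLin A x = μ • x) : 0 < μ := by
  have hpos : 0 < ⟪Matrix.toEuclideanLin A x, x⟫ := by
    simpa [EuclideanSpace.inner_eq_star_dotProduct, Matrix.toLpLin_apply, dotProduct_comm] using
      hA.dotProduct_mulVec_pos (x := WithLp.ofLp x) (by simpa using hx)
  rw [hμ, real_inner_smul_left] at hpos
  exact pos_of_mul_pos_left hpos real_inner_self_nonneg

section Orthonormal

variable {E : Type*} [NormedAddCommGroup E] [InnerProductSpace ℝ E] {u v : E}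

theorem inner_smul_add_smul_of_orthonormal (hu : ‖u‖ = 1) (hv : ‖v‖ = 1) (huv : ⟪u, v⟫ = 0)
    (a b c d : ℝ) : ⟪a • u + b • v, c • u + d • v⟫ = a * c + b * d := by
  have hvu : ⟪v, u⟫ = 0 := by rwa [real_inner_comm]
  simp only [inner_add_left, inner_add_right, real_inner_smul_left, real_inner_smul_right,
    real_inner_self_eq_norm_sq, hu, hv, huv, hvu]
  ring

theorem norm_smul_add_smul_of_orthonormal (hu : ‖u‖ = 1) (hv : ‖v‖ = 1) (huv : ⟪u, v⟫ = 0)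
    (a b : ℝ) : ‖a • u + b • v‖ = √(a ^ 2 + b ^ 2) := by
  rw [norm_eq_sqrt_real_inner, inner_smul_add_smul_of_orthonormal hu hv huv]
  ring_nf

theorem inner_apply_eq_mul_norm_of_antieigenvector (hu : ‖u‖ = 1) (hv : ‖v‖ = 1)
    (huv : ⟪u, v⟫ = 0) (T : E →ₗ[ℝ] E) {α β : ℝ} (hα : 0 < α) (hβ : 0 < β)
    (hTu : T u = α • u) (hTv : T v = β • v) :
    let x := √(β / (α + β)) • u + √(α / (α + β)) • v
    ⟪T x, x⟫ = 2 * √(α * β) / (α + β) * ‖T x‖ * ‖x‖ := by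
  intro x
  set a := √(β / (α + β))
  set b := √(α / (α + β))
  have ha : a ^ 2 = β / (α + β) := Real.sq_sqrt (by positivity)
  have hb : b ^ 2 = α / (α + β) := Real.sq_sqrt (by positivity)
  have hs : α + β ≠ 0 := by positivity
  have hTx : T x = (a * α) • u + (b * β) • v := by
    simp only [x, map_add, map_smul, hTu, hTv, smul_smul, mul_comm, a, b]
  have hinner : ⟪T x, x⟫ = 2 * (α * β) / (α + β) := by
    rw [hTx, inner_smul_add_smul_of_orthonormal hu hv huv]
    calc a * α * a + b * β * b = a ^ 2 * α + b ^ 2 * β := by ring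
      _ = 2 * (α * β) / (α + β) := by rw [ha, hb]; field_simp; ring
  have hnorm_x : ‖x‖ = 1 := by
    rw [norm_smul_add_smul_of_orthonormal hu hv huv, ha, hb, ← add_div, add_comm,
      div_self hs, Real.sqrt_one]
  have hnorm_Tx : ‖T x‖ = √(α * β) := by
    rw [hTx, norm_smul_add_smul_of_orthonormal hu hv huv]
    congr 1
    calc (a * α) ^ 2 + (b * β) ^ 2 = a ^ 2 * α ^ 2 + b ^ 2 * β ^ 2 := by ring
      _ = α * β := by rw [ha, hb]; field_simp
  rw [hinner, hnorm_x, hnorm_Tx]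
  linear_combination (-2 / (α + β)) * Real.mul_self_sqrt (mul_pos hα hβ).le

end Orthonormal

theorem antieigenvector_angle_general {n : ℕ} (A : Matrix (Fin n) (Fin n) ℝ)
    (hPD : A.PosDef) (lam1 lamn : ℝ)
    (x1 xn : EuclideanSpace ℝ (Fin n)) (hx1 : ‖x1‖ = 1) (hxn : ‖xn‖ = 1)
    (horth : ⟪x1, xn⟫ = 0)
    (hex1 : Matrix.toEuclideanLin A x1 = lam1 • x1)
    (hexn : Matrix.toEuclideanLin A xn = lamn • xn) :
    let xp : EuclideanSpace ℝ (Fin n) :=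
      Real.sqrt (lamn / (lam1 + lamn)) • x1 + Real.sqrt (lam1 / (lam1 + lamn)) • xn
    ⟪Matrix.toEuclideanLin A xp, xp⟫ =
      (2 * Real.sqrt (lam1 * lamn) / (lam1 + lamn)) *
        ‖Matrix.toEuclideanLin A xp‖ * ‖xp‖ := by
  have hne_zero {x : EuclideanSpace ℝ (Fin n)} (hx : ‖x‖ = 1) : x ≠ 0 :=
    norm_ne_zero_iff.mp (hx ▸ one_ne_zero)
  exact inner_apply_eq_mul_norm_of_antieigenvector hx1 hxn horth _
    (hPD.pos_of_toEuclideanLin_eq_smul (hne_zero hx1) hex1)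
    (hPD.pos_of_toEuclideanLin_eq_smul (hne_zero hxn) hexn) hex1 hexn

theorem antieigenvector_angle {n : ℕ} (A : Matrix (Fin n) (Fin n) ℝ)
    (hSymm : A.IsSymm) (hPD : A.PosDef) (lam1 lamn : ℝ) (hlt : lam1 < lamn)
    (hbound : ∀ μ, IsEigenvalue A μ → lam1 ≤ μ ∧ μ ≤ lamn)
    (x1 xn : EuclideanSpace ℝ (Fin n)) (hx1 : ‖x1‖ = 1) (hxn : ‖xn‖ = 1)
    (horth : ⟪x1, xn⟫ = 0)
    (hex1 : Matrix.toEuclideanLin A x1 = lam1 • x1)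
    (hexn : Matrix.toEuclideanLin A xn = lamn • xn) :
    let xp : EuclideanSpace ℝ (Fin n) :=
      Real.sqrt (lamn / (lam1 + lamn)) • x1 + Real.sqrt (lam1 / (lam1 + lamn)) • xn
    ⟪Matrix.toEuclideanLin A xp, xp⟫ =
      (2 * Real.sqrt (lam1 * lamn) / (lam1 + lamn)) *
        ‖Matrix.toEuclideanLin A xp‖ * ‖xp‖ :=
  antieigenvector_angle_general A hPD lam1 lamn x1 xn hx1 hxn horth hex1 hexn
end
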